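/- In the Lie group SU(2) with Lie algebra basis E₁, E₂, E₃ satisfying [E₁,E₂]=E₃, [E₂,E₃]=E₁, [E₃,E₁]=E₂, the function f(ξ) := 2·arccos(cos²(ξ/2) + sin²(ξ/2)·cos ξ) is a strictly increasing bijection from [0, π] to [0, 2π]. -/

import Mathlib

/-!
Since `cos ξ = 2 cos² (ξ/2) - 1`, the argument of `arccos` equals `1 - (1 - cos ξ)² / 2`. On
`[0, π]` the cosine decreases from `1` to `-1`, so this argument decreases strictly from `1` to
`-1`; composing with the strictly decreasing `arccos` gives a strictly increasing continuous map
from `0` to `2π`, which is a bijection of intervals by the intermediate value theorem.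
-/

open Real Set

theorem cos_half_sq_add_sin_half_sq_mul_cos (ξ : ℝ) :
    cos (ξ / 2) ^ 2 + sin (ξ / 2) ^ 2 * cos ξ = 1 - (1 - cos ξ) ^ 2 / 2 := by
  have hcos : cos ξ = 2 * cos (ξ / 2) ^ 2 - 1 := by rw [← cos_two_mul]; ring_nf
  rw [hcos]
  linear_combination (2 * cos (ξ / 2) ^ 2 - 1) * sin_sq_add_cos_sq (ξ / 2)

theorem one_sub_one_sub_cos_sq_div_two_mem_Icc (ξ : ℝ) :
    1 - (1 - cos ξ) ^ 2 / 2 ∈ Icc (-1 : ℝ) 1 := by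
  have h₁ := neg_one_le_cos ξ
  have h₂ := cos_le_one ξ
  constructor <;> nlinarith

theorem strictAntiOn_one_sub_one_sub_cos_sq_div_two :
    StrictAntiOn (fun ξ ↦ 1 - (1 - cos ξ) ^ 2 / 2) (Icc 0 π) := by
  intro x hx y hy hxy
  have hcos : cos y < cos x := strictAntiOn_cos hx hy hxy
  have hsq : (1 - cos x) ^ 2 < (1 - cos y) ^ 2 :=
    pow_lt_pow_left₀ (by linarith) (by linarith [cos_le_one x]) two_ne_zero
  dsimp only
  linarith

theorem ContinuousOn.bijOn_Icc_of_strictMonoOn {α β : Type*} [ConditionallyCompleteLinearOrder α]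
    [TopologicalSpace α] [OrderTopology α] [DenselyOrdered α] [LinearOrder β]
    [TopologicalSpace β] [OrderClosedTopology β] {f : α → β} {a b : α} (hab : a ≤ b)
    (hf : ContinuousOn f (Icc a b)) (hmono : StrictMonoOn f (Icc a b)) :
    BijOn f (Icc a b) (Icc (f a) (f b)) :=
  ⟨hmono.monotoneOn.mapsTo_Icc, hmono.injOn, intermediate_value_Icc hab hf⟩

theorem stmt_12 :
    StrictMonoOn
      (fun ξ : ℝ => 2 * Real.arccos (Real.cos (ξ / 2) ^ 2 + Real.sin (ξ / 2) ^ 2 * Real.cos ξ))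
      (Set.Icc 0 Real.pi) ∧
    Set.BijOn
      (fun ξ : ℝ => 2 * Real.arccos (Real.cos (ξ / 2) ^ 2 + Real.sin (ξ / 2) ^ 2 * Real.cos ξ))
      (Set.Icc 0 Real.pi) (Set.Icc 0 (2 * Real.pi)) := by
  simp_rw [cos_half_sq_add_sin_half_sq_mul_cos]
  have hmono : StrictMonoOn (fun ξ ↦ 2 * arccos (1 - (1 - cos ξ) ^ 2 / 2)) (Icc 0 π) :=
    (strictMono_mul_left_of_pos two_pos).comp_strictMonoOn <|
      strictAntiOn_arccos.comp strictAntiOn_one_sub_one_sub_cos_sq_div_two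
        fun ξ _ ↦ one_sub_one_sub_cos_sq_div_two_mem_Icc ξ
  have hcont : Continuous fun ξ ↦ 2 * arccos (1 - (1 - cos ξ) ^ 2 / 2) := by fun_prop
  refine ⟨hmono, ?_⟩
  have hbij := hcont.continuousOn.bijOn_Icc_of_strictMonoOn pi_nonneg hmono
  norm_num [arccos_neg_one] at hbij
  exact hbij
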